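/- Let n ≥ 2 and let A be an n×n real sign pattern. Say that the digraph of A contains a k-cycle if there exist k distinct indices v_1,…,v_k in {1,…,n} with A_{v_i v_{i+1}} ≠ 0 for i = 1,…,k−1 and A_{v_k v_1} ≠ 0. Then: (i) if n ≡ 0 (mod 8) and the digraph of A contains an (n−1)-cycle, then some M ∈ Q_A has D2(M) > 0; (ii) if n ≡ 4 (mod 8) and the digraph of A contains an (n−1)-cycle, then some M ∈ Q_A has D2(M) < 0; (iii) if n ≡ 1 (mod 8) and the digraph of A contains an n-cycle, then some M ∈ Q_A has D2(M) > 0; (iv) if n ≡ 5 (mod 8) and the digraph of A contains an n-cycle, then some M ∈ Q_A has D2(M) < 0. -/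

import Mathlib

/-- The `k`-th minor-sum of an `n × n` real matrix `M`, extended to integer
indices by `0` outside `0 ≤ k ≤ n`. -/
noncomputable def minorSum (n : ℕ) (M : Matrix (Fin n) (Fin n) ℝ) (k : ℤ) : ℝ :=
  if 0 ≤ k ∧ k ≤ (n : ℤ) then (-1) ^ k.toNat * (Matrix.charpoly M).coeff (n - k.toNat)
  else 0

/-- The determinant of the second additive compound of `M`, computed as the
determinant of the `(n-1) × (n-1)` matrix whose `(i,j)` entry (1-indexed) is
`J_{2i-j}(M)`. -/
noncomputable def D2 (n : ℕ) (M : Matrix (Fin n) (Fin n) ℝ) : ℝ :=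
  Matrix.det (Matrix.of fun i j : Fin (n - 1) =>
    minorSum n M (2 * ((i : ℕ) : ℤ) + 2 - (((j : ℕ) : ℤ) + 1)))

/-- The qualitative class of a sign pattern `A`. -/
def qualClass (n : ℕ) (A : Matrix (Fin n) (Fin n) ℝ) : Set (Matrix (Fin n) (Fin n) ℝ) :=
  {M | ∀ i j, Real.sign (M i j) = Real.sign (A i j)}

/-- The digraph of `A` contains a `k`-cycle: there are `k` distinct vertices
`v 0, …, v (k-1)` with an arc from each `v i` to `v (i+1)` (indices mod `k`). -/
def hasCycle (n k : ℕ) (hk : 0 < k) (A : Matrix (Fin n) (Fin n) ℝ) : Prop :=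
  ∃ v : Fin k → Fin n, Function.Injective v ∧
    ∀ i : Fin k, A (v i) (v (i + ⟨1 % k, Nat.mod_lt 1 hk⟩)) ≠ 0

/-! Keeping only the entries of `A` on an odd `k`-cycle of its digraph (`k = 2l + 1`,
`k ∈ {n - 1, n}`) gives a matrix `B` in the closure of `Q_A` with characteristic polynomial
`X ^ n - c X ^ (n - k)`, where `c ≠ 0` is the product of the cycle entries. Hence `J_0(B) = 1`,
`J_k(B) = c` and every other `J_m(B)` vanishes, so the matrix defining `D2(B)` is a generalized
permutation matrix with `l` entries `1` and `n - 1 - l` entries `c`, supported on the permutation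
`i ↦ 2i + 1` (`i < l`), `i ↦ 2(i - l)` (`i ≥ l`), whose sign is `(-1) ^ ⌊(l + 1)/2⌋`. The residue
of `n` mod 8 makes `n - 1 - l` even and fixes that sign. Since `B + s (A - B) ∈ Q_A` for `s > 0`
and `D2` is continuous, a small `s` gives the required `M`. -/

open Polynomial Finset

theorem Matrix.continuous_charpoly_coeff {R n : Type*} [CommRing R] [TopologicalSpace R]
    [IsTopologicalRing R] [Fintype n] [DecidableEq n] (k : ℕ) :
    Continuous fun M : Matrix n n R => M.charpoly.coeff k := by
  have h (M : Matrix n n R) : M.charpoly.coeff k =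
      MvPolynomial.eval (fun p : n × n => M p.1 p.2) ((Matrix.charpoly.univ R n).coeff k) := by
    rw [MvPolynomial.eval, Matrix.charpoly.univ_coeff_eval₂Hom]
    rfl
  simp_rw [h]
  exact (MvPolynomial.continuous_eval _).comp (by fun_prop)

theorem continuous_minorSum (n : ℕ) (k : ℤ) : Continuous fun M => minorSum n M k := by
  unfold minorSum
  split_ifs
  · exact continuous_const.mul (Matrix.continuous_charpoly_coeff _)
  · exact continuous_const

theorem continuous_D2 (n : ℕ) : Continuous (D2 n) :=
  (continuous_matrix fun _ _ => continuous_minorSum n _).matrix_det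

theorem Real.sign_mul_of_pos {s : ℝ} (hs : 0 < s) (r : ℝ) : Real.sign (s * r) = Real.sign r := by
  rcases lt_trichotomy r 0 with hr | rfl | hr
  · rw [sign_of_neg hr, sign_of_neg (mul_neg_of_pos_of_neg hs hr)]
  · rw [mul_zero]
  · rw [sign_of_pos hr, sign_of_pos (mul_pos hs hr)]

theorem exists_mem_qualClass_of_continuous {n : ℕ} {A B : Matrix (Fin n) (Fin n) ℝ}
    (hB : ∀ i j, B i j = A i j ∨ B i j = 0) {f : Matrix (Fin n) (Fin n) ℝ → ℝ}
    (hf : Continuous f) (hfB : 0 < f B) : ∃ M ∈ qualClass n A, 0 < f M := by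
  have hmem : ∀ s : ℝ, 0 < s → B + s • (A - B) ∈ qualClass n A := by
    intro s hs i j
    rcases hB i j with h | h <;> simp [h, Real.sign_mul_of_pos hs]
  have hlim : Filter.Tendsto (fun s : ℝ => f (B + s • (A - B))) (nhdsWithin 0 (Set.Ioi 0))
      (nhds (f B)) := by
    have hcont : Continuous fun s : ℝ => f (B + s • (A - B)) := by fun_prop
    simpa using (hcont.tendsto 0).mono_left nhdsWithin_le_nhds
  obtain ⟨s, hfs, hs⟩ :=
    ((hlim.eventually (lt_mem_nhds hfB)).and self_mem_nhdsWithin).exists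
  exact ⟨_, hmem s hs, hfs⟩

theorem Equiv.Perm.IsCycle.eq_one_or_eq_of_forall_apply {α : Type*} [Finite α]
    {σ τ : Equiv.Perm α} (hτ : τ.IsCycle) (hστ : ∀ x, σ x = x ∨ σ x = τ x) :
    σ = 1 ∨ σ = τ := by
  by_cases hfix : ∀ x, σ x = x
  · exact Or.inl (Equiv.ext hfix)
  obtain ⟨x, hx⟩ := not_forall.1 hfix
  have hτx : τ x ≠ x := ((hστ x).resolve_left hx) ▸ hx
  -- Agreement with `τ` propagates along the orbit: if `σ y = τ y ≠ y` but `σ` fixed `τ y`,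
  -- then `σ (τ y) = τ y = σ y`, contradicting injectivity.
  have horbit : ∀ m : ℕ, σ ((τ ^ m) x) = τ ((τ ^ m) x) := by
    intro m
    induction m with
    | zero => exact (hστ x).resolve_left hx
    | succ m ih =>
      rw [pow_succ', Equiv.Perm.mul_apply]
      refine (hστ _).resolve_left fun hfixed => ?_
      have hmoved : τ ((τ ^ m) x) ≠ (τ ^ m) x := by
        rwa [Ne, Equiv.Perm.apply_pow_apply_eq_iff]
      exact hmoved (σ.injective (hfixed.trans ih.symm))
  refine Or.inr (Equiv.ext fun y => ?_)
  by_cases hy : τ y = y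
  · rw [hy]; exact ((hστ y).elim id fun h => h.trans hy)
  · obtain ⟨m, rfl⟩ := hτ.exists_pow_eq hτx hy
    exact horbit m

theorem Matrix.charpoly_eq_of_isCycle {R n : Type*} [CommRing R] [Fintype n] [DecidableEq n]
    {π : Equiv.Perm n} (hπ : π.IsCycle) {B : Matrix n n R}
    (hB : ∀ i j, B i j ≠ 0 → π i = j ∧ i ∈ π.support) :
    B.charpoly = X ^ Fintype.card n
      - C (∏ i ∈ π.support, B i (π i)) * X ^ (Fintype.card n - #π.support) := by
  have hdiag (i : n) : B i i = 0 := by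
    by_contra h
    obtain ⟨hπi, hi⟩ := hB i i h
    exact Equiv.Perm.mem_support.1 hi hπi
  have hcharmatrix_diag (i : n) : B.charmatrix i i = X := by
    rw [Matrix.charmatrix_apply_eq, hdiag, map_zero, sub_zero]
  have hterm : ∀ σ : Equiv.Perm n, σ ≠ 1 → σ ≠ π⁻¹ →
      (Equiv.Perm.sign σ : R[X]) * ∏ i, B.charmatrix (σ i) i = 0 := by
    intro σ hσ1 hσπ
    suffices ∃ i, B.charmatrix (σ i) i = 0 by
      obtain ⟨i, hi⟩ := this
      rw [prod_eq_zero (mem_univ i) (f := fun i => B.charmatrix (σ i) i) hi, mul_zero]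
    by_contra! hne
    refine ((hπ.inv).eq_one_or_eq_of_forall_apply fun i => ?_).elim hσ1 hσπ
    by_cases hσi : σ i = i
    · exact Or.inl hσi
    have hBne : B (σ i) i ≠ 0 := by
      simpa [Matrix.charmatrix_apply_ne _ _ _ hσi] using hne i
    exact Or.inr (Equiv.Perm.eq_inv_iff_eq.2 (hB _ _ hBne).1)
  rw [Matrix.charpoly, Matrix.det_apply', Fintype.sum_eq_add 1 π⁻¹ (by simpa using hπ.ne_one)
    fun σ hσ => hterm σ hσ.1 hσ.2]
  have hid : ∏ i, B.charmatrix ((1 : Equiv.Perm n) i) i = X ^ Fintype.card n := by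
    simp [hdiag]
  have hcycle : ∏ i, B.charmatrix (π⁻¹ i) i
      = (-1) ^ #π.support * C (∏ i ∈ π.support, B i (π i))
        * X ^ (Fintype.card n - #π.support) := by
    rw [← Equiv.prod_comp π]
    simp only [Equiv.Perm.coe_inv, Equiv.symm_apply_apply]
    have hon (i : n) (hi : i ∈ π.support) : B.charmatrix i (π i) = -C (B i (π i)) :=
      Matrix.charmatrix_apply_ne _ _ _ (Equiv.Perm.mem_support.1 hi).symm
    have hoff (i : n) (hi : i ∈ π.supportᶜ) : B.charmatrix i (π i) = X := by
      rw [Equiv.Perm.notMem_support.1 (mem_compl.1 hi), hcharmatrix_diag]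
    rw [← prod_mul_prod_compl π.support, prod_congr rfl hon, prod_congr rfl hoff, prod_const,
      card_compl, prod_neg, map_prod]
  have hsq : ((-1 : R[X]) ^ #π.support) * (-1) ^ #π.support = 1 := by
    rw [← mul_pow]; simp
  rw [hid, hcycle, Equiv.Perm.sign_one, Equiv.Perm.sign_inv, hπ.sign]
  push_cast
  linear_combination (-(C (∏ i ∈ π.support, B i (π i))
    * X ^ (Fintype.card n - #π.support))) * hsq

theorem prod_range_ite_lt {M : Type*} [CommMonoid M] [HasDistribNeg M] (l m : ℕ) :
    ∏ i ∈ range l, (if i < m then (1 : M) else -1) = (-1) ^ (l - m) := by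
  induction l with
  | zero => simp
  | succ l ih =>
    rw [prod_range_succ, ih]
    split_ifs with h
    · rw [mul_one, Nat.sub_eq_zero_of_le h.le, Nat.sub_eq_zero_of_le h]
    · rw [Nat.succ_sub (not_lt.1 h), pow_succ]

theorem prod_range_neg_one_pow {M : Type*} [CommMonoid M] [HasDistribNeg M] (L : ℕ) :
    ∏ m ∈ range L, (-1 : M) ^ m = (-1) ^ (L / 2) := by
  induction L with
  | zero => simp
  | succ L ih =>
    obtain ⟨t, ht⟩ : ∃ t, L / 2 + L = (L + 1) / 2 + 2 * t := ⟨L / 2, by omega⟩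
    rw [prod_range_succ, ih, ← pow_add, ht, pow_add, pow_mul, neg_one_sq, one_pow, mul_one]

theorem Equiv.Perm.sign_eq_prod_range_prod_range {N : ℕ} (σ : Equiv.Perm (Fin N)) {u : ℕ → ℕ}
    (hu : ∀ i, (σ i : ℕ) = u i) :
    Equiv.Perm.sign σ = ∏ j ∈ range N, ∏ i ∈ range j, if u i < u j then 1 else -1 := by
  rw [σ.sign_eq_prod_prod_Iio,
    ← Fin.prod_univ_eq_prod_range fun j => ∏ i ∈ range j, if u i < u j then 1 else -1]
  refine prod_congr rfl fun j _ => ?_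
  rw [← Nat.Iio_eq_range, ← Fin.map_valEmbedding_Iio, prod_map]
  simp [Fin.lt_def, hu]

theorem Matrix.det_eq_sign_mul_prod_of_eq_zero {R n : Type*} [CommRing R] [Fintype n]
    [DecidableEq n] {B : Matrix n n R} (τ : Equiv.Perm n) (hB : ∀ i j, j ≠ τ i → B i j = 0) :
    B.det = Equiv.Perm.sign τ * ∏ i, B i (τ i) := by
  have hfactor : B = Matrix.diagonal (fun i => B i (τ i)) * τ.permMatrix R := by
    ext i j
    by_cases h : j = τ i
    · simp [h, PEquiv.toMatrix_apply]
    · simp [hB i j h, PEquiv.toMatrix_apply, Ne.symm h]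
  conv_lhs => rw [hfactor]
  rw [Matrix.det_mul, Matrix.det_diagonal, Matrix.det_permutation, mul_comm]

def unshuffle (l i : ℕ) : ℕ := if i < l then 2 * i + 1 else 2 * (i - l)

theorem unshuffle_of_lt {l i : ℕ} (h : i < l) : unshuffle l i = 2 * i + 1 := if_pos h

theorem unshuffle_of_le {l i : ℕ} (h : l ≤ i) : unshuffle l i = 2 * (i - l) := if_neg h.not_gt

theorem unshuffle_injective (l : ℕ) : Function.Injective (unshuffle l) := by
  intro a b h
  unfold unshuffle at h
  split_ifs at h <;> omega

theorem unshuffle_lt {l N i : ℕ} (hlN : 2 * l ≤ N) (hNl : N ≤ 2 * l + 1) (hi : i < N) :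
    unshuffle l i < N := by
  unfold unshuffle
  split_ifs <;> omega

noncomputable def unshufflePerm (l N : ℕ) (hlN : 2 * l ≤ N) (hNl : N ≤ 2 * l + 1) :
    Equiv.Perm (Fin N) :=
  Equiv.ofBijective (fun i => ⟨unshuffle l i, unshuffle_lt hlN hNl i.isLt⟩)
    (Finite.injective_iff_bijective.1 fun _ _ h =>
      Fin.ext (unshuffle_injective l (congrArg Fin.val h)))

theorem unshufflePerm_apply_val {l N : ℕ} (hlN : 2 * l ≤ N) (hNl : N ≤ 2 * l + 1) (i : Fin N) :
    (unshufflePerm l N hlN hNl i : ℕ) = unshuffle l i := rfl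

theorem prod_range_unshuffle_lt (l j : ℕ) :
    ∏ i ∈ range j, (if unshuffle l i < unshuffle l j then 1 else -1 : ℤˣ)
      = if j < l then 1 else (-1) ^ (l - (j - l)) := by
  split_ifs with hjl
  · refine prod_eq_one fun i hi => if_pos ?_
    rw [mem_range] at hi
    rw [unshuffle_of_lt hjl, unshuffle_of_lt (hi.trans hjl)]
    omega
  · rw [not_lt] at hjl
    rw [← prod_range_mul_prod_Ico _ hjl, ← prod_range_ite_lt,
      prod_eq_one (s := Ico l j), mul_one]
    · refine prod_congr rfl fun i hi => ?_
      rw [mem_range] at hi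
      rw [unshuffle_of_lt hi, unshuffle_of_le hjl]
      exact if_congr (by omega) rfl rfl
    · intro i hi
      rw [mem_Ico] at hi
      rw [unshuffle_of_le hi.1, unshuffle_of_le hjl, if_pos (by omega)]

theorem sign_unshufflePerm (l N : ℕ) (hlN : 2 * l ≤ N) (hNl : N ≤ 2 * l + 1) :
    Equiv.Perm.sign (unshufflePerm l N hlN hNl) = (-1) ^ ((l + 1) / 2) := by
  rw [Equiv.Perm.sign_eq_prod_range_prod_range _ (unshufflePerm_apply_val hlN hNl)]
  simp only [prod_range_unshuffle_lt]
  have hfull : ∏ j ∈ range N, (if j < l then 1 else (-1) ^ (l - (j - l)) : ℤˣ)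
      = ∏ j ∈ range (l + (l + 1)), (if j < l then 1 else (-1) ^ (l - (j - l))) := by
    refine prod_subset (range_subset_range.2 (by omega)) fun j hj hjN => ?_
    simp only [mem_range] at hj hjN
    rw [if_neg (by omega), show l - (j - l) = 0 by omega, pow_zero]
  rw [hfull, prod_range_add, prod_eq_one fun j hj => if_pos (mem_range.1 hj),
    one_mul, ← prod_range_neg_one_pow, ← prod_range_reflect]
  refine prod_congr rfl fun m hm => ?_
  rw [mem_range] at hm
  rw [if_neg (by omega)]
  congr 1
  omega

theorem minorSum_of_charpoly_eq {n k : ℕ} {M : Matrix (Fin n) (Fin n) ℝ} {c : ℝ} (hk : Odd k)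
    (hkn : k ≤ n) (hM : M.charpoly = X ^ n - C c * X ^ (n - k)) (z : ℤ) :
    minorSum n M z = if z = 0 then 1 else if z = k then c else 0 := by
  have hk0 : 0 < k := hk.pos
  unfold minorSum
  by_cases hz : 0 ≤ z ∧ z ≤ n
  · obtain ⟨m, rfl⟩ := Int.eq_ofNat_of_zero_le hz.1
    simp only [if_pos hz, Int.toNat_natCast, Nat.cast_eq_zero, Nat.cast_inj, hM, coeff_sub,
      coeff_X_pow, coeff_C_mul_X_pow]
    by_cases hm0 : m = 0
    · simp [hm0, show n ≠ n - k by omega]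
    by_cases hmk : m = k
    · simp [hmk, hk0.ne', hk.neg_one_pow, show n - k ≠ n by omega]
    · simp only [if_neg hm0, if_neg hmk, if_neg (show n - m ≠ n by omega),
        if_neg (show n - m ≠ n - k by omega)]
      ring
  · rw [if_neg hz, if_neg (by omega), if_neg (by omega)]

theorem D2_of_charpoly_eq {n k : ℕ} {M : Matrix (Fin n) (Fin n) ℝ} {c : ℝ} (hk : Odd k)
    (hkn : k ≤ n) (hnk : n ≤ k + 1) (hM : M.charpoly = X ^ n - C c * X ^ (n - k)) :
    D2 n M = (-1) ^ ((k + 1) / 4) * c ^ (n - 1 - k / 2) := by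
  obtain ⟨l, rfl⟩ := hk
  rw [show (2 * l + 1 + 1) / 4 = (l + 1) / 2 by omega, show (2 * l + 1) / 2 = l by omega]
  have hentry (i j : Fin (n - 1)) :
      minorSum n M (2 * ((i : ℕ) : ℤ) + 2 - (((j : ℕ) : ℤ) + 1))
        = if (j : ℕ) = unshuffle l i then (if (i : ℕ) < l then 1 else c) else 0 := by
    rw [minorSum_of_charpoly_eq ⟨l, rfl⟩ hkn hM]
    have hi := i.isLt
    have hj := j.isLt
    unfold unshuffle
    split_ifs <;> first | rfl | omega
  set τ := unshufflePerm l (n - 1) (by omega) (by omega)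
  have hτ (i : Fin (n - 1)) : (τ i : ℕ) = unshuffle l i := unshufflePerm_apply_val _ _ i
  unfold D2
  rw [Matrix.det_eq_sign_mul_prod_of_eq_zero τ fun i j hj => by
      rw [Matrix.of_apply, hentry, if_neg fun h => hj (Fin.ext (h.trans (hτ i).symm))],
    sign_unshufflePerm]
  simp only [Matrix.of_apply, hentry]
  rw [prod_congr rfl fun i _ => if_pos (hτ i),
    Fin.prod_univ_eq_prod_range (fun i => if i < l then (1 : ℝ) else c),
    ← prod_range_mul_prod_Ico _ (show l ≤ n - 1 by omega),
    prod_eq_one fun i hi => if_pos (mem_range.1 hi), one_mul,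
    prod_congr rfl fun i hi => if_neg (mem_Ico.1 hi).1.not_gt,
    prod_const, Nat.card_Ico]
  push_cast
  ring

theorem hasCycle.exists_isCycle {n k : ℕ} {hk0 : 0 < k} {A : Matrix (Fin n) (Fin n) ℝ}
    (hk : 2 ≤ k) (h : hasCycle n k hk0 A) :
    ∃ π : Equiv.Perm (Fin n), π.IsCycle ∧ #π.support = k ∧ ∀ i ∈ π.support, A i (π i) ≠ 0 := by
  classical
  obtain ⟨v, hv, harc⟩ := h
  obtain ⟨m, rfl⟩ : ∃ m, k = m + 2 := ⟨k - 2, by omega⟩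
  refine ⟨(finRotate (m + 2)).extendDomain (Equiv.ofInjective v hv),
    isCycle_finRotate.extendDomain _, by simp [support_finRotate], fun i hi => ?_⟩
  rw [Equiv.Perm.support_extend_domain, support_finRotate] at hi
  obtain ⟨t, -, rfl⟩ := mem_map.1 hi
  have hone : (⟨1 % (m + 2), Nat.mod_lt 1 hk0⟩ : Fin (m + 2)) = 1 := rfl
  have hstep := (finRotate (m + 2)).extendDomain_apply_image (Equiv.ofInjective v hv) t
  simp only [Equiv.ofInjective_apply, finRotate_apply] at hstep
  simpa [hstep, hone] using harc t

theorem exists_mem_qualClass_neg_one_pow_mul_D2_pos {n k : ℕ} {hk0 : 0 < k}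
    {A : Matrix (Fin n) (Fin n) ℝ} (hk : Odd k) (hk1 : 1 < k) (hkn : k ≤ n) (hnk : n ≤ k + 1)
    (hpar : Even (n - 1 - k / 2)) (h : hasCycle n k hk0 A) :
    ∃ M ∈ qualClass n A, 0 < (-1) ^ ((k + 1) / 4) * D2 n M := by
  obtain ⟨π, hπ, hcard, harc⟩ := h.exists_isCycle hk1
  set B : Matrix (Fin n) (Fin n) ℝ :=
    Matrix.of fun i j => if π i = j ∧ i ∈ π.support then A i j else 0
  have hB (i j : Fin n) (hij : B i j ≠ 0) : π i = j ∧ i ∈ π.support := by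
    by_contra h
    exact hij (if_neg h)
  have hBA (i j : Fin n) : B i j = A i j ∨ B i j = 0 := by
    by_cases h : π i = j ∧ i ∈ π.support
    · exact Or.inl (if_pos h)
    · exact Or.inr (if_neg h)
  set c := ∏ i ∈ π.support, B i (π i)
  have hc : c ≠ 0 := prod_ne_zero_iff.2 fun i hi => by
    rw [show B i (π i) = A i (π i) from if_pos ⟨rfl, hi⟩]
    exact harc i hi
  have hcharpoly : B.charpoly = X ^ n - C c * X ^ (n - k) := by
    rw [Matrix.charpoly_eq_of_isCycle hπ hB, Fintype.card_fin, hcard]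
  refine exists_mem_qualClass_of_continuous hBA (continuous_const.mul (continuous_D2 n)) ?_
  rw [D2_of_charpoly_eq hk hkn hnk hcharpoly, ← mul_assoc, ← pow_add, ← two_mul, pow_mul,
    neg_one_sq, one_pow, one_mul]
  exact hpar.pow_pos hc

theorem cycle_obstructions
    (n : ℕ) (hn : 2 ≤ n) (A : Matrix (Fin n) (Fin n) ℝ) :
    ((n % 8 = 0 ∧ hasCycle n (n - 1) (by omega) A) → ∃ M ∈ qualClass n A, 0 < D2 n M) ∧
    ((n % 8 = 4 ∧ hasCycle n (n - 1) (by omega) A) → ∃ M ∈ qualClass n A, D2 n M < 0) ∧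
    ((n % 8 = 1 ∧ hasCycle n n (by omega) A) → ∃ M ∈ qualClass n A, 0 < D2 n M) ∧
    ((n % 8 = 5 ∧ hasCycle n n (by omega) A) → ∃ M ∈ qualClass n A, D2 n M < 0) := by
  refine ⟨fun ⟨h8, hcyc⟩ => ?_, fun ⟨h8, hcyc⟩ => ?_, fun ⟨h8, hcyc⟩ => ?_, fun ⟨h8, hcyc⟩ => ?_⟩
  all_goals
    obtain ⟨M, hM, hpos⟩ := exists_mem_qualClass_neg_one_pow_mul_D2_pos
      (Nat.odd_iff.2 (by omega)) (by omega) (by omega) (by omega) (Nat.even_iff.2 (by omega)) hcyc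
    refine ⟨M, hM, ?_⟩
  · rwa [Even.neg_one_pow (Nat.even_iff.2 (by omega)), one_mul] at hpos
  · rwa [Odd.neg_one_pow (Nat.odd_iff.2 (by omega)), neg_one_mul, neg_pos] at hpos
  · rwa [Even.neg_one_pow (Nat.even_iff.2 (by omega)), one_mul] at hpos
  · rwa [Odd.neg_one_pow (Nat.odd_iff.2 (by omega)), neg_one_mul, neg_pos] at hpos
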